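/- arXiv:1509.00283 — 4 statements merged into one kernel-verified Lean document; each statement's English description precedes it below -/
import Mathlib

section
/- Let k, k₁ be natural numbers with k ≤ K and k₁ ≤ M - 1 - K, where M > K. Then (2π/M) · Σ_{s=1}^{M} Y_{(k₁,ℓ₁)}(2πs/M) · Y_{(k,ℓ)}(2πs/M) = δ_{k,k₁} δ_{ℓ,ℓ₁}, i.e., the trapezoidal sum of the product of the two circular harmonics equals the Kronecker delta. -/
open Real

/-- The orthonormalized circular harmonics. -/
noncomputable def Y : ℕ → ℕ → ℝ → ℝ
  | 0, _, _ => 1 / Real.sqrt (2 * π)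
  | k, 1, φ => Real.cos (k * φ) / Real.sqrt π
  | k, _, φ => Real.sin (k * φ) / Real.sqrt π

/-- `a_k`: the number of circular harmonics of degree `k`. -/
def aa (k : ℕ) : ℕ := if k = 0 then 1 else 2

/-!
The points `e^{iθₛ}`, `θₛ = 2π(s+1)/M`, are the `M`-th roots of unity, so `∑ₛ e^{inθₛ}`
vanishes unless `M ∣ n`, and `∑ₛ sin (nθₛ)` vanishes for every integer `n`. The product-to-sum
formulas reduce the sum of a product of two harmonics of degrees `k`, `k₁` to such sums at the
frequencies `k ± k₁`, and `k + k₁ < M` keeps these away from the nonzero multiples of `M`.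
-/

open Finset

noncomputable def node (M s : ℕ) : ℝ := 2 * π * (s + 1) / M

theorem sum_exp_int_mul_node_eq_zero {M : ℕ} {n : ℤ} (hn : ¬ (M : ℤ) ∣ n) :
    ∑ s ∈ range M, Complex.exp (↑(n * node M s) * Complex.I) = 0 := by
  rcases eq_or_ne M 0 with rfl | hM
  · simp
  have hζ := Complex.isPrimitiveRoot_exp M hM
  set w := Complex.exp (2 * π * Complex.I / M) ^ n
  have hw : w ≠ 1 := (hζ.zpow_eq_one_iff_dvd n).not.mpr hn
  have hwM : w ^ M = 1 := by
    rw [← zpow_natCast, ← zpow_mul, mul_comm n, zpow_mul, zpow_natCast, hζ.pow_eq_one, one_zpow]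
  have hterm : ∀ s : ℕ, Complex.exp (↑(n * node M s) * Complex.I) = w * w ^ s := by
    intro s
    rw [← pow_succ', ← zpow_natCast, ← zpow_mul, ← Complex.exp_int_mul]
    congr 1
    simp only [node]
    push_cast
    ring
  rw [sum_congr rfl fun s _ => hterm s, ← mul_sum, geom_sum_eq hw, hwM, sub_self, zero_div,
    mul_zero]

theorem sum_cos_int_mul_node {M : ℕ} {n : ℤ} (hn : |n| < M) :
    ∑ s ∈ range M, cos (n * node M s) = if n = 0 then (M : ℝ) else 0 := by
  split_ifs with h0
  · simp [h0]
  have hdvd : ¬ (M : ℤ) ∣ n := fun h => h0 (Int.eq_zero_of_abs_lt_dvd h hn)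
  simpa only [Complex.re_sum, Complex.exp_ofReal_mul_I_re, Complex.zero_re] using
    congrArg Complex.re (sum_exp_int_mul_node_eq_zero hdvd)

theorem sum_sin_int_mul_node (M : ℕ) (n : ℤ) : ∑ s ∈ range M, sin (n * node M s) = 0 := by
  by_cases hdvd : (M : ℤ) ∣ n
  · obtain ⟨j, rfl⟩ := hdvd
    rcases eq_or_ne M 0 with rfl | hM
    · simp
    refine sum_eq_zero fun s _ => ?_
    have h : ((M * j : ℤ) : ℝ) * node M s = ((2 * j * (s + 1) : ℤ) : ℝ) * π := by
      simp only [node]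
      push_cast
      field_simp
    rw [h, sin_int_mul_pi]
  · simpa only [Complex.im_sum, Complex.exp_ofReal_mul_I_im, Complex.zero_im] using
      congrArg Complex.im (sum_exp_int_mul_node_eq_zero hdvd)

section ProductSums

variable {M a b : ℕ}

theorem sum_cos_mul_cos_node (hab : a + b < M) :
    ∑ s ∈ range M, cos (a * node M s) * cos (b * node M s)
      = if a = b then (M : ℝ) / aa a else 0 := by
  have hsum : ∀ s, cos (a * node M s) * cos (b * node M s)
      = (cos (((a - b : ℤ) : ℝ) * node M s) + cos (((a + b : ℤ) : ℝ) * node M s)) / 2 := by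
    intro s
    push_cast
    rw [sub_mul, add_mul, cos_sub, cos_add]
    ring
  rw [sum_congr rfl fun s _ => hsum s, ← sum_div, sum_add_distrib,
    sum_cos_int_mul_node (abs_lt.mpr ⟨by omega, by omega⟩),
    sum_cos_int_mul_node (abs_lt.mpr ⟨by omega, by omega⟩)]
  by_cases h : a = b
  · subst h
    by_cases ha : a = 0 <;> simp [aa, ha]
  · rw [if_neg (by omega), if_neg (by omega), if_neg h]
    norm_num

theorem sum_sin_mul_sin_node (ha : a ≠ 0) (hab : a + b < M) :
    ∑ s ∈ range M, sin (a * node M s) * sin (b * node M s)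
      = if a = b then (M : ℝ) / 2 else 0 := by
  have hsum : ∀ s, sin (a * node M s) * sin (b * node M s)
      = (cos (((a - b : ℤ) : ℝ) * node M s) - cos (((a + b : ℤ) : ℝ) * node M s)) / 2 := by
    intro s
    push_cast
    rw [sub_mul, add_mul, cos_sub, cos_add]
    ring
  rw [sum_congr rfl fun s _ => hsum s, ← sum_div, sum_sub_distrib,
    sum_cos_int_mul_node (abs_lt.mpr ⟨by omega, by omega⟩),
    sum_cos_int_mul_node (abs_lt.mpr ⟨by omega, by omega⟩)]
  by_cases h : a = b
  · subst h
    simp [ha]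
  · rw [if_neg (by omega), if_neg (by omega), if_neg h]
    norm_num

theorem sum_sin_mul_cos_node (M a b : ℕ) :
    ∑ s ∈ range M, sin (a * node M s) * cos (b * node M s) = 0 := by
  have hsum : ∀ s, sin (a * node M s) * cos (b * node M s)
      = (sin (((a - b : ℤ) : ℝ) * node M s) + sin (((a + b : ℤ) : ℝ) * node M s)) / 2 := by
    intro s
    push_cast
    rw [sub_mul, add_mul, sin_sub, sin_add]
    ring
  rw [sum_congr rfl fun s _ => hsum s, ← sum_div, sum_add_distrib, sum_sin_int_mul_node,
    sum_sin_int_mul_node, add_zero, zero_div]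

end ProductSums

noncomputable def trigBasis (k ℓ : ℕ) (φ : ℝ) : ℝ := if ℓ = 1 then cos (k * φ) else sin (k * φ)

theorem eq_one_or_eq_two_of_le_aa {k ℓ : ℕ} (hℓ : 1 ≤ ℓ ∧ ℓ ≤ aa k) : ℓ = 1 ∨ ℓ = 2 ∧ k ≠ 0 := by
  unfold aa at hℓ
  split_ifs at hℓ <;> omega

theorem Y_eq_trigBasis_div {k ℓ : ℕ} (hℓ : 1 ≤ ℓ ∧ ℓ ≤ aa k) (φ : ℝ) :
    Y k ℓ φ = trigBasis k ℓ φ / √(2 * π / aa k) := by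
  rcases k with _ | k
  · obtain rfl : ℓ = 1 := by simp only [aa, if_pos] at hℓ; omega
    simp [Y, trigBasis, aa]
  · have hπ : 2 * π / aa (k + 1) = π := by simp [aa]
    rw [hπ]
    rcases eq_one_or_eq_two_of_le_aa hℓ with rfl | ⟨rfl, -⟩ <;> rfl

theorem sum_trigBasis_mul_trigBasis {M k k₁ ℓ ℓ₁ : ℕ} (hkM : k + k₁ < M)
    (hℓ : 1 ≤ ℓ ∧ ℓ ≤ aa k) (hℓ₁ : 1 ≤ ℓ₁ ∧ ℓ₁ ≤ aa k₁) :
    ∑ s ∈ range M, trigBasis k₁ ℓ₁ (node M s) * trigBasis k ℓ (node M s)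
      = if k = k₁ ∧ ℓ = ℓ₁ then (M : ℝ) / aa k else 0 := by
  rcases eq_one_or_eq_two_of_le_aa hℓ with rfl | ⟨rfl, hk⟩ <;>
    rcases eq_one_or_eq_two_of_le_aa hℓ₁ with rfl | ⟨rfl, hk₁⟩
  · simp only [trigBasis, if_true, and_true, sum_cos_mul_cos_node (by omega : k₁ + k < M)]
    by_cases h : k = k₁
    · simp [h]
    · simp [h, Ne.symm h]
  · simp [trigBasis, sum_sin_mul_cos_node]
  · simp [trigBasis, mul_comm (cos _), sum_sin_mul_cos_node]
  · simp only [trigBasis, if_neg (by norm_num : (2 : ℕ) ≠ 1), and_true,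
      sum_sin_mul_sin_node hk₁ (by omega : k₁ + k < M)]
    by_cases h : k = k₁
    · simp [h, aa, hk₁]
    · simp [h, Ne.symm h]

/-- Discrete orthogonality: the trapezoidal sum of the product of two circular
harmonics of degrees `k ≤ K` and `k₁ ≤ M - 1 - K` (with `M > K`) is the Kronecker delta. -/
theorem trapezoidal_orthogonality (M K k k₁ ℓ ℓ₁ : ℕ) (hMK : K < M)
    (hk : k ≤ K) (hk₁ : k₁ ≤ M - 1 - K)
    (hℓ : 1 ≤ ℓ ∧ ℓ ≤ aa k) (hℓ₁ : 1 ≤ ℓ₁ ∧ ℓ₁ ≤ aa k₁) :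
    (2 * π / M) * ∑ s ∈ Finset.range M,
        Y k₁ ℓ₁ (2 * π * (s + 1) / M) * Y k ℓ (2 * π * (s + 1) / M)
      = if k = k₁ ∧ ℓ = ℓ₁ then 1 else 0 := by
  have hsum : ∑ s ∈ range M, Y k₁ ℓ₁ (node M s) * Y k ℓ (node M s)
      = (if k = k₁ ∧ ℓ = ℓ₁ then (M : ℝ) / aa k else 0)
          / (√(2 * π / aa k₁) * √(2 * π / aa k)) := by
    simp only [Y_eq_trigBasis_div hℓ, Y_eq_trigBasis_div hℓ₁, div_mul_div_comm, ← sum_div]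
    rw [sum_trigBasis_mul_trigBasis (by omega) hℓ hℓ₁]
  simp only [node] at hsum
  rw [hsum]
  split_ifs with h
  · obtain ⟨rfl, rfl⟩ := h
    have hM : (M : ℝ) ≠ 0 := by norm_cast; omega
    have haa : (aa k : ℝ) ≠ 0 := by unfold aa; split_ifs <;> norm_num
    rw [mul_self_sqrt (by positivity)]
    field_simp
  · simp
end

section
/- For a bivariate polynomial p(x,y), there exist univariate polynomials p̃_{(k,ℓ)} and N ≤ deg p such that p(r cos φ, r sin φ) = Σ_{k=0}^{N} Σ_{ℓ=1}^{a_k} p̃_{(k,ℓ)}(r²) r^k Y_{(k,ℓ)}(φ) (the Almansi/Gauss decomposition). Consequently, every Fourier coefficient of a polynomial p has the form p_{(k,ℓ)}(r) = p̃_{(k,ℓ)}(r²) r^k. -/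
/-!
Write `x = r cos φ` and `y = r sin φ = r cos (φ - π/2)`. By product-to-sum, `r cos (φ - β)`
times the mode `r ^ (2j + k) cos (kφ - α)` is a combination of the modes of indices `(j, k + 1)`
and `(j + 1, k - 1)` (two modes `(j, 1)` when `k = 0`), so a monomial of degree `d` is a
combination of modes with `k ≤ d`, and each mode is `(r²)^j r^k` times a combination of `Y k 1`
and `Y k 2`. The Fourier coefficients are then read off from the orthonormality of the `Y k ℓ`
on `[0, 2π]`, again by product-to-sum once `Y k ℓ φ` is written as a multiple of
`cos (kφ - phase)`.
-/

open Real MeasureTheory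

open intervalIntegral

theorem integral_cos_int_mul_sub (n : ℤ) (α : ℝ) :
    ∫ φ in (0:ℝ)..2 * π, cos (n * φ - α) = if n = 0 then 2 * π * cos α else 0 := by
  split_ifs with hn
  · simp [hn]
  · have hn' : (n : ℝ) ≠ 0 := by exact_mod_cast hn
    rw [integral_comp_mul_sub (fun x => cos x) hn']
    simp [sub_eq_neg_add, sin_add_int_mul_two_pi]

theorem cos_mul_cos_eq (a b : ℝ) : cos a * cos b = cos (a + b) / 2 + cos (a - b) / 2 := by
  rw [cos_add, cos_sub]; ring

theorem integral_cos_mul_cos (m n : ℤ) (α β : ℝ) :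
    ∫ φ in (0:ℝ)..2 * π, cos (m * φ - α) * cos (n * φ - β) =
      (if m + n = 0 then π * cos (α + β) else 0) + (if m - n = 0 then π * cos (α - β) else 0) := by
  have h : ∀ φ : ℝ, cos (m * φ - α) * cos (n * φ - β) =
      cos (((m + n : ℤ) : ℝ) * φ - (α + β)) / 2 + cos (((m - n : ℤ) : ℝ) * φ - (α - β)) / 2 := by
    intro φ
    rw [cos_mul_cos_eq]
    congr 3 <;> push_cast <;> ring
  have hint : ∀ (k : ℤ) (γ : ℝ),
      IntervalIntegrable (fun φ : ℝ => cos (k * φ - γ) / 2) volume 0 (2 * π) := fun k γ =>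
    (by fun_prop : Continuous fun φ : ℝ => cos (k * φ - γ) / 2).intervalIntegrable _ _
  simp only [h]
  rw [integral_add (hint _ _) (hint _ _), intervalIntegral.integral_div,
    intervalIntegral.integral_div, integral_cos_int_mul_sub, integral_cos_int_mul_sub]
  split_ifs <;> ring

noncomputable def harmonicPhase (ℓ : ℕ) : ℝ := if ℓ = 1 then 0 else π / 2

theorem Y_eq_cos {k ℓ : ℕ} (hℓ : 1 ≤ ℓ) (hℓk : ℓ ≤ aa k) (φ : ℝ) :
    Y k ℓ φ = cos (k * φ - harmonicPhase ℓ) / √(if k = 0 then 2 * π else π) := by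
  rcases k with _ | k
  · obtain rfl : ℓ = 1 := le_antisymm (by simpa [aa] using hℓk) hℓ
    simp [Y, harmonicPhase]
  · have : ℓ ≤ 2 := by simpa [aa] using hℓk
    interval_cases ℓ <;> simp [Y, harmonicPhase, cos_sub_pi_div_two]

theorem integral_Y_mul_Y {k ℓ k' ℓ' : ℕ} (hℓ : 1 ≤ ℓ) (hℓk : ℓ ≤ aa k) (hℓ' : 1 ≤ ℓ')
    (hℓk' : ℓ' ≤ aa k') :
    ∫ φ in (0:ℝ)..2 * π, Y k ℓ φ * Y k' ℓ' φ = if k = k' ∧ ℓ = ℓ' then 1 else 0 := by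
  simp only [Y_eq_cos hℓ hℓk, Y_eq_cos hℓ' hℓk', div_mul_div_comm]
  rw [intervalIntegral.integral_div]
  have := integral_cos_mul_cos k k' (harmonicPhase ℓ) (harmonicPhase ℓ')
  push_cast at this
  rw [this]
  rcases eq_or_ne k k' with rfl | hkk
  · rcases k with _ | k
    · obtain rfl : ℓ = 1 := by simp [aa] at hℓk; omega
      obtain rfl : ℓ' = 1 := by simp [aa] at hℓk'; omega
      simp [harmonicPhase, ← two_mul, -sqrt_mul, Real.mul_self_sqrt two_pi_pos.le, two_pi_pos.ne']
    · have : ℓ ≤ 2 := by simpa [aa] using hℓk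
      have : ℓ' ≤ 2 := by simpa [aa] using hℓk'
      have hk : (k : ℤ) + 1 ≠ 0 := by omega
      interval_cases ℓ <;> interval_cases ℓ' <;>
        simp [hk, harmonicPhase, Real.mul_self_sqrt pi_pos.le, pi_ne_zero]
  · have hsum : (k : ℤ) + k' ≠ 0 := by omega
    have hdiff : (k : ℤ) - k' ≠ 0 := by omega
    simp [hsum, hdiff, hkk]

theorem continuous_Y {k ℓ : ℕ} (hℓ : 1 ≤ ℓ) (hℓk : ℓ ≤ aa k) : Continuous (Y k ℓ) := by
  rw [funext (Y_eq_cos hℓ hℓk)]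
  fun_prop

theorem integral_sum_mul_Y (N : ℕ) (c : ℕ → ℕ → ℝ) {k ℓ : ℕ} (hℓ : 1 ≤ ℓ) (hℓk : ℓ ≤ aa k) :
    ∫ φ in (0:ℝ)..2 * π, (∑ k' ∈ Finset.range (N + 1), ∑ ℓ' ∈ Finset.Icc 1 (aa k'),
        c k' ℓ' * Y k' ℓ' φ) * Y k ℓ φ = if k ≤ N then c k ℓ else 0 := by
  have hcont : ∀ k', ∀ ℓ' ∈ Finset.Icc 1 (aa k'),
      Continuous fun φ => c k' ℓ' * (Y k' ℓ' φ * Y k ℓ φ) := by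
    intro k' ℓ' hℓ'
    rw [Finset.mem_Icc] at hℓ'
    exact continuous_const.mul ((continuous_Y hℓ'.1 hℓ'.2).mul (continuous_Y hℓ hℓk))
  have hterm : ∀ k', ∀ ℓ' ∈ Finset.Icc 1 (aa k'),
      ∫ φ in (0:ℝ)..2 * π, c k' ℓ' * (Y k' ℓ' φ * Y k ℓ φ) =
        if k' = k ∧ ℓ' = ℓ then c k' ℓ' else 0 := by
    intro k' ℓ' hℓ'
    rw [Finset.mem_Icc] at hℓ'
    rw [intervalIntegral.integral_const_mul, integral_Y_mul_Y hℓ'.1 hℓ'.2 hℓ hℓk, mul_ite, mul_one,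
      mul_zero]
  simp only [Finset.sum_mul, mul_assoc]
  rw [integral_finsetSum fun k' _ =>
    (continuous_finsetSum _ (hcont k')).intervalIntegrable _ _]
  rw [Finset.sum_congr rfl fun k' _ => (integral_finsetSum fun ℓ' hℓ' =>
    (hcont k' ℓ' hℓ').intervalIntegrable _ _).trans (Finset.sum_congr rfl (hterm k'))]
  simp [ite_and, Finset.sum_ite_eq', hℓ, hℓk]

theorem Submodule.mul_mem_span_of_forall {R A : Type*} [CommSemiring R] [Semiring A]
    [Algebra R A] {s t : Set A} {g x : A} (h : ∀ y ∈ s, g * y ∈ Submodule.span R t)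
    (hx : x ∈ Submodule.span R s) : g * x ∈ Submodule.span R t :=
  (Submodule.span_le (p := (Submodule.span R t).comap (LinearMap.mulLeft R g))).mpr h hx

noncomputable def radialMode (j k : ℕ) (α : ℝ) : ℝ → ℝ → ℝ :=
  fun r φ => r ^ (2 * j + k) * cos (k * φ - α)

def modeSpan (N : ℕ) : Submodule ℝ (ℝ → ℝ → ℝ) :=
  Submodule.span ℝ {f | ∃ j k α, k ≤ N ∧ radialMode j k α = f}

theorem radialMode_mem_modeSpan {j k N : ℕ} (hk : k ≤ N) (α : ℝ) :
    radialMode j k α ∈ modeSpan N :=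
  Submodule.subset_span ⟨j, k, α, hk, rfl⟩

theorem modeSpan_mono {M N : ℕ} (h : M ≤ N) : modeSpan M ≤ modeSpan N :=
  Submodule.span_mono fun _ ⟨j, k, α, hk, hf⟩ => ⟨j, k, α, hk.trans h, hf⟩

theorem polar_mul_radialMode_zero (j : ℕ) (α β : ℝ) :
    (fun r φ => r * cos (φ - β)) * radialMode j 0 α =
      (1 / 2 : ℝ) • radialMode j 1 (α + β) + (1 / 2 : ℝ) • radialMode j 1 (β - α) := by
  ext r φ
  simp only [radialMode, Pi.mul_apply, Pi.add_apply, Pi.smul_apply, smul_eq_mul]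
  have hsum : (φ - β) + ((0 : ℕ) * φ - α) = (1 : ℕ) * φ - (α + β) := by push_cast; ring
  have hdiff : (φ - β) - ((0 : ℕ) * φ - α) = (1 : ℕ) * φ - (β - α) := by push_cast; ring
  rw [mul_mul_mul_comm, cos_mul_cos_eq, hsum, hdiff]
  ring

theorem polar_mul_radialMode_succ (j k : ℕ) (α β : ℝ) :
    (fun r φ => r * cos (φ - β)) * radialMode j (k + 1) α =
      (1 / 2 : ℝ) • radialMode j (k + 2) (α + β) + (1 / 2 : ℝ) • radialMode (j + 1) k (α - β) := by
  ext r φ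
  simp only [radialMode, Pi.mul_apply, Pi.add_apply, Pi.smul_apply, smul_eq_mul]
  have hsum : (φ - β) + ((k + 1 : ℕ) * φ - α) = (k + 2 : ℕ) * φ - (α + β) := by push_cast; ring
  have hdiff : (φ - β) - ((k + 1 : ℕ) * φ - α) = -(k * φ - (α - β)) := by push_cast; ring
  rw [mul_mul_mul_comm, cos_mul_cos_eq, hsum, hdiff, cos_neg]
  ring

theorem polar_mul_mem_modeSpan {N : ℕ} {f : ℝ → ℝ → ℝ} (β : ℝ) (hf : f ∈ modeSpan N) :
    (fun r φ => r * cos (φ - β)) * f ∈ modeSpan (N + 1) := by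
  refine Submodule.mul_mem_span_of_forall ?_ hf
  rintro _ ⟨j, k | k, α, hk, rfl⟩
  · rw [polar_mul_radialMode_zero]
    exact add_mem (Submodule.smul_mem _ _ (radialMode_mem_modeSpan (by omega) _))
      (Submodule.smul_mem _ _ (radialMode_mem_modeSpan (by omega) _))
  · rw [polar_mul_radialMode_succ]
    exact add_mem (Submodule.smul_mem _ _ (radialMode_mem_modeSpan (by omega) _))
      (Submodule.smul_mem _ _ (radialMode_mem_modeSpan (by omega) _))

theorem one_mem_modeSpan (N : ℕ) : (1 : ℝ → ℝ → ℝ) ∈ modeSpan N := by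
  convert radialMode_mem_modeSpan (j := 0) (Nat.zero_le N) 0
  ext r φ
  simp [radialMode]

theorem pow_mul_mem_modeSpan {g : ℝ → ℝ → ℝ}
    (hg : ∀ (N : ℕ) (f : ℝ → ℝ → ℝ), f ∈ modeSpan N → g * f ∈ modeSpan (N + 1))
    (m : ℕ) {N : ℕ} {f : ℝ → ℝ → ℝ} (hf : f ∈ modeSpan N) : g ^ m * f ∈ modeSpan (N + m) := by
  induction m with
  | zero => simpa using hf
  | succ m ih => simpa only [pow_succ', mul_assoc, ← add_assoc] using hg _ _ ih

theorem monomial_mem_modeSpan (m n : ℕ) :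
    (fun r φ => r * cos φ) ^ m * (fun r φ => r * sin φ) ^ n ∈ modeSpan (m + n) := by
  have hx : ∀ N f, f ∈ modeSpan N → (fun r φ => r * cos φ) * f ∈ modeSpan (N + 1) :=
    fun _ _ hf => by simpa only [sub_zero] using polar_mul_mem_modeSpan 0 hf
  have hy : ∀ N f, f ∈ modeSpan N → (fun r φ => r * sin φ) * f ∈ modeSpan (N + 1) :=
    fun _ _ hf => by simpa only [cos_sub_pi_div_two] using polar_mul_mem_modeSpan (π / 2) hf
  have := pow_mul_mem_modeSpan hx m
    (by simpa using pow_mul_mem_modeSpan hy n (one_mem_modeSpan 0))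
  rwa [add_comm n m] at this

theorem eval_polar_mem_modeSpan (p : MvPolynomial (Fin 2) ℝ) :
    (fun r φ => MvPolynomial.eval
      (fun i : Fin 2 => if i = 0 then r * cos φ else r * sin φ) p) ∈ modeSpan p.totalDegree := by
  have hsum : (fun r φ => MvPolynomial.eval
      (fun i : Fin 2 => if i = 0 then r * cos φ else r * sin φ) p) =
      ∑ d ∈ p.support, p.coeff d •
        ((fun r φ => r * cos φ) ^ d 0 * (fun r φ => r * sin φ) ^ d 1) := by
    ext r φ
    simp [MvPolynomial.eval_eq', Fin.prod_univ_two, Finset.sum_apply]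
  rw [hsum]
  refine Submodule.sum_mem _ fun d hd => Submodule.smul_mem _ _ ?_
  refine modeSpan_mono ?_ (monomial_mem_modeSpan _ _)
  simpa [Finsupp.sum_fintype, Fin.sum_univ_two] using MvPolynomial.le_totalDegree hd

open Polynomial in
noncomputable def almansiSpace (N : ℕ) : Submodule ℝ (ℝ → ℝ → ℝ) where
  carrier := {f | ∃ q : ℕ → ℕ → ℝ[X], ∀ r φ, f r φ = ∑ k ∈ Finset.range (N + 1),
    ∑ ℓ ∈ Finset.Icc 1 (aa k), (q k ℓ).eval (r ^ 2) * r ^ k * Y k ℓ φ}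
  zero_mem' := ⟨0, by simp⟩
  add_mem' := by
    rintro f g ⟨q, hq⟩ ⟨q', hq'⟩
    exact ⟨q + q', fun r φ => by simp [hq, hq', add_mul, Finset.sum_add_distrib]⟩
  smul_mem' := by
    rintro c f ⟨q, hq⟩
    exact ⟨fun k ℓ => C c * q k ℓ, fun r φ => by simp [hq, Finset.mul_sum, mul_assoc]⟩

open Polynomial in
theorem pow_mul_Y_mem_almansiSpace (j : ℕ) {k ℓ N : ℕ} (hk : k ≤ N) (hℓ : 1 ≤ ℓ)
    (hℓk : ℓ ≤ aa k) : (fun r φ => r ^ (2 * j + k) * Y k ℓ φ) ∈ almansiSpace N :=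
  ⟨fun k' ℓ' => if k' = k ∧ ℓ' = ℓ then X ^ j else 0, fun r φ => by
    simp [apply_ite (eval (r ^ 2)), ite_and, Finset.sum_ite_eq', hk, hℓ, hℓk,
      pow_add, pow_mul]⟩

theorem radialMode_mem_almansiSpace (j : ℕ) {k N : ℕ} (hk : k ≤ N) (α : ℝ) :
    radialMode j k α ∈ almansiSpace N := by
  rcases k with _ | k
  · have hmode :
        radialMode j 0 α = (√(2 * π) * cos α) • fun r φ => r ^ (2 * j + 0) * Y 0 1 φ := by
      ext r φ
      simp only [radialMode, Y, Pi.smul_apply, smul_eq_mul, Nat.cast_zero, zero_mul, zero_sub,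
        cos_neg]
      field_simp
    rw [hmode]
    exact Submodule.smul_mem _ _ (pow_mul_Y_mem_almansiSpace j hk le_rfl le_rfl)
  · have hmode : radialMode j (k + 1) α =
        (√π * cos α) • (fun r φ => r ^ (2 * j + (k + 1)) * Y (k + 1) 1 φ) +
        (√π * sin α) • (fun r φ => r ^ (2 * j + (k + 1)) * Y (k + 1) 2 φ) := by
      ext r φ
      simp only [radialMode, Y, cos_sub, Pi.add_apply, Pi.smul_apply, smul_eq_mul]
      field_simp
    rw [hmode]
    have hℓ₁ := pow_mul_Y_mem_almansiSpace j hk le_rfl (by simp [aa] : 1 ≤ aa (k + 1))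
    have hℓ₂ := pow_mul_Y_mem_almansiSpace j hk one_le_two (by simp [aa] : 2 ≤ aa (k + 1))
    exact add_mem (Submodule.smul_mem _ _ hℓ₁) (Submodule.smul_mem _ _ hℓ₂)

theorem modeSpan_le_almansiSpace (N : ℕ) : modeSpan N ≤ almansiSpace N :=
  Submodule.span_le.mpr fun _ ⟨j, _, α, hk, hf⟩ => hf ▸ radialMode_mem_almansiSpace j hk α

/-- Almansi/Gauss decomposition of a bivariate polynomial: there exist univariate
polynomials `p̃_{(k,ℓ)}` and `N ≤ deg p` with
`p(r cos φ, r sin φ) = ∑_{k=0}^N ∑_{ℓ=1}^{a_k} p̃_{(k,ℓ)}(r²) r^k Y_{(k,ℓ)}(φ)`;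
consequently every Fourier coefficient of `p` has the form `p̃_{(k,ℓ)}(r²) r^k`. -/
theorem almansi_decomposition (p : MvPolynomial (Fin 2) ℝ) :
    ∃ (N : ℕ) (q : ℕ → ℕ → Polynomial ℝ), N ≤ p.totalDegree ∧
      (∀ r φ : ℝ,
        MvPolynomial.eval (fun i : Fin 2 => if i = 0 then r * Real.cos φ else r * Real.sin φ) p
          = ∑ k ∈ Finset.range (N + 1), ∑ ℓ ∈ Finset.Icc 1 (aa k),
              (q k ℓ).eval (r ^ 2) * r ^ k * Y k ℓ φ) ∧
      (∀ k ℓ : ℕ, 1 ≤ ℓ → ℓ ≤ aa k → ∀ r : ℝ,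
        (∫ φ in (0:ℝ)..(2 * π),
            (MvPolynomial.eval
              (fun i : Fin 2 => if i = 0 then r * Real.cos φ else r * Real.sin φ) p)
              * Y k ℓ φ)
          = (q k ℓ).eval (r ^ 2) * r ^ k) := by
  obtain ⟨q, hq⟩ := modeSpan_le_almansiSpace _ (eval_polar_mem_modeSpan p)
  set N := p.totalDegree
  -- the Fourier coefficients of order `> N` vanish, so `q` has to be truncated there
  set q' : ℕ → ℕ → Polynomial ℝ := fun k ℓ => if k ≤ N then q k ℓ else 0
  have hrep : ∀ r φ : ℝ,
      MvPolynomial.eval (fun i : Fin 2 => if i = 0 then r * cos φ else r * sin φ) p =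
        ∑ k ∈ Finset.range (N + 1), ∑ ℓ ∈ Finset.Icc 1 (aa k),
          (q' k ℓ).eval (r ^ 2) * r ^ k * Y k ℓ φ := fun r φ =>
    (hq r φ).trans <| Finset.sum_congr rfl fun k hk => by
      simp only [q', if_pos (Finset.mem_range_succ_iff.mp hk)]
  refine ⟨N, q', le_rfl, hrep, fun k ℓ hℓ hℓk r => ?_⟩
  simp_rw [hrep r]
  rw [integral_sum_mul_Y _ _ hℓ hℓk]
  split_ifs with hk <;> simp [q', hk]
end

section
/- Fix an integer k ≥ 0 and let μ be a finite positive measure on [0, R²] with density ρ^{k/2} v(√ρ) dρ/2 where v : (0,R) → [0,∞) is continuous with ∫_0^R v(r) r dr < ∞, and assume μ has infinite support. Let t_j, λ_j (j = 1,…,N) be the nodes and positive weights of the N-point Gaussian quadrature for μ. Then Σ_{j=1}^{N} λ_j · t_j^{−k/2} ≤ ∫_0^R v(r) r dr. -/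
/-!
Let `h ρ = ρ ^ (-k/2)` and let `H` be the Hermite interpolant of `h` at the nodes (values and first
derivatives), a polynomial of degree `< 2N`. Exactness of the quadrature gives
`∑ λⱼ h(tⱼ) = ∑ λⱼ H(tⱼ) = ∫ H dμ`, so it suffices that `H ≤ h` on `(0, ∞)`. If `H x > h x`, then
`P = H + a ∏ⱼ (X - tⱼ)²` with `a < 0` chosen so that `P x = h x` makes `h - P` vanish at `x` and
doubly at every node; by Rolle its `2N`-th derivative `h⁽²ᴺ⁾ - a (2N)!` has a zero, which is
impossible because `h⁽²ᴺ⁾ ≥ 0`. Finally `∫ h dμ = ∫₀ᴿ v(r) r dr` by the substitution `ρ = r²`.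
-/

open Real MeasureTheory Polynomial Finset Set
open scoped ContDiff

protected theorem Polynomial.iteratedDeriv (p : ℝ[X]) (n : ℕ) (x : ℝ) :
    iteratedDeriv n (fun x => p.eval x) x = (derivative^[n] p).eval x := by
  induction n generalizing p with
  | zero => simp
  | succ n ih =>
    have hderiv : deriv (fun x => p.eval x) = fun x => p.derivative.eval x := by
      ext x; exact p.deriv
    rw [iteratedDeriv_succ', hderiv, ih, Function.iterate_succ_apply]

theorem Polynomial.iterate_derivative_eq_C_of_natDegree_le {R : Type*} [CommSemiring R]
    {p : R[X]} {n : ℕ} (hp : p.natDegree ≤ n) :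
    derivative^[n] p = C (n.factorial * p.coeff n) := by
  rw [eq_C_of_natDegree_le_zero ((natDegree_iterate_derivative p n).trans (by omega)),
    coeff_iterate_derivative, zero_add, Nat.descFactorial_self, nsmul_eq_mul]

theorem Lagrange.exists_hermite_interpolant {F ι : Type*} [Field F] [DecidableEq ι]
    {s : Finset ι} {v : ι → F} (hvs : Set.InjOn v s) (r r' : ι → F) :
    ∃ H : F[X], H.degree < ↑(2 * #s) ∧
      ∀ i ∈ s, H.eval (v i) = r i ∧ H.derivative.eval (v i) = r' i := by
  set L := interpolate s v r
  -- At a node, `nodal s v * Q` vanishes and has derivative `(nodal s v)'(v i) * Q (v i)`, where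
  -- `(nodal s v)'(v i) = (nodalWeight s v i)⁻¹`; so `Q` corrects the derivatives of `L`.
  set Q := interpolate s v fun i => (r' i - L.derivative.eval (v i)) * nodalWeight s v i
  refine ⟨L + nodal s v * Q, ?_, fun i hi => ⟨?_, ?_⟩⟩
  · have hL := degree_interpolate_lt r hvs
    have hQ : Q.degree < #s := degree_interpolate_lt _ hvs
    refine (degree_add_le _ _).trans_lt (max_lt (hL.trans_le ?_) ?_)
    · exact_mod_cast (by omega : #s ≤ 2 * #s)
    · rw [degree_mul, degree_nodal, two_mul, Nat.cast_add]
      exact WithBot.add_lt_add_left (WithBot.coe_ne_bot) hQ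
  · rw [eval_add, eval_mul, eval_nodal_at_node hi, zero_mul, add_zero]
    exact eval_interpolate_at_node r hvs hi
  · have hw := nodalWeight_ne_zero hvs hi
    rw [nodalWeight_eq_eval_derivative_nodal hi, Ne, inv_eq_zero] at hw
    simp only [derivative_add, derivative_mul, eval_add, eval_mul, eval_nodal_at_node hi,
      zero_mul, add_zero, Q, eval_interpolate_at_node _ hvs hi,
      nodalWeight_eq_eval_derivative_nodal hi]
    field_simp
    ring

theorem exists_finset_deriv_eq_zero {f : ℝ → ℝ} {U : Set ℝ} (hU : U.OrdConnected)
    (hf : ContinuousOn f U) {S : Finset ℝ} (hSU : ↑S ⊆ U) (hS : ∀ x ∈ S, f x = 0) :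
    ∃ T : Finset ℝ, ↑T ⊆ U ∧ Disjoint T S ∧ #S ≤ #T + 1 ∧ ∀ z ∈ T, deriv f z = 0 := by
  have rolle : ∀ p ∈ S ×ˢ S, p.1 < p.2 → ∃ z ∈ Ioo p.1 p.2, deriv f z = 0 := by
    intro p hp hlt
    rw [Finset.mem_product] at hp
    exact exists_deriv_eq_zero hlt (hf.mono (hU.out (hSU hp.1) (hSU hp.2)))
      (by rw [hS _ hp.1, hS _ hp.2])
  choose! g hgI hg0 using rolle
  have hg : ∀ z ∈ ({p ∈ S ×ˢ S | p.1 < p.2}).image g, ∃ x ∈ S, ∃ y ∈ S,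
      z ∈ Ioo x y ∧ deriv f z = 0 := by
    simp only [Finset.mem_image, Finset.mem_filter, Finset.mem_product]
    rintro _ ⟨p, ⟨⟨hx, hy⟩, hlt⟩, rfl⟩
    exact ⟨p.1, hx, p.2, hy, hgI p (Finset.mem_product.2 ⟨hx, hy⟩) hlt,
      hg0 p (Finset.mem_product.2 ⟨hx, hy⟩) hlt⟩
  refine ⟨({p ∈ S ×ˢ S | p.1 < p.2}).image g \ S, ?_, sdiff_disjoint,
    card_le_sdiff_of_interleaved fun x hx y hy hxy _ => ?_, fun z hz => ?_⟩
  · intro z hz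
    obtain ⟨x, hx, y, hy, hz, -⟩ := hg z (Finset.mem_sdiff.1 hz).1
    exact hU.out (hSU hx) (hSU hy) (Ioo_subset_Icc_self hz)
  · have hp : (x, y) ∈ S ×ˢ S := Finset.mem_product.2 ⟨hx, hy⟩
    exact ⟨g (x, y), Finset.mem_image_of_mem g (Finset.mem_filter.2 ⟨hp, hxy⟩), hgI _ hp hxy⟩
  · obtain ⟨-, -, -, -, -, h⟩ := hg z (Finset.mem_sdiff.1 hz).1
    exact h

theorem exists_iteratedDeriv_eq_zero_of_lt_card_add_card {f : ℝ → ℝ} {U : Set ℝ}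
    (hUo : IsOpen U) (hU : U.OrdConnected) (hf : ContDiffOn ℝ ∞ f U) {S D : Finset ℝ}
    (hSU : ↑S ⊆ U) (hDS : D ⊆ S) (hS : ∀ x ∈ S, f x = 0) (hD : ∀ x ∈ D, deriv f x = 0)
    {n : ℕ} (hn : n < #S + #D) : ∃ c ∈ U, iteratedDeriv n f c = 0 := by
  have hDS' := Finset.card_le_card hDS
  induction n generalizing f S D with
  | zero =>
    obtain ⟨c, hc⟩ : S.Nonempty := card_pos.1 (by omega)
    exact ⟨c, hSU hc, by simpa using hS c hc⟩
  | succ n ih =>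
    obtain ⟨T, hTU, hTS, hcard, hT⟩ := exists_finset_deriv_eq_zero hU hf.continuousOn hSU hS
    have hTD : Disjoint T D := hTS.mono_right hDS
    obtain ⟨c, hc, hc0⟩ := ih (hf.deriv_of_isOpen hUo le_rfl) (S := T ∪ D) (D := ∅)
      (by simpa using ⟨hTU, (Finset.coe_subset.2 hDS).trans hSU⟩) (empty_subset _)
      (fun x hx => (Finset.mem_union.1 hx).elim (hT x) (hD x)) (by simp)
      (by rw [card_union_of_disjoint hTD]; omega) (by simp)
    exact ⟨c, hc, by rwa [iteratedDeriv_succ']⟩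

theorem Polynomial.eval_le_of_iteratedDeriv_nonneg {f : ℝ → ℝ} {U : Set ℝ} (hUo : IsOpen U)
    (hU : U.OrdConnected) (hf : ContDiffOn ℝ ∞ f U) {S : Finset ℝ} (hSU : ↑S ⊆ U)
    (hf2n : ∀ x ∈ U, 0 ≤ iteratedDeriv (2 * #S) f x) {H : ℝ[X]} (hH : H.degree < ↑(2 * #S))
    (hHf : ∀ s ∈ S, H.eval s = f s ∧ H.derivative.eval s = deriv f s) {x : ℝ} (hx : x ∈ U) :
    H.eval x ≤ f x := by
  by_contra! hlt
  have hxS : x ∉ S := fun h => hlt.ne' (hHf x h).1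
  set q := Lagrange.nodal S id ^ 2
  have hq : ∀ s ∈ S, q.eval s = 0 ∧ q.derivative.eval s = 0 := fun s hs => by
    have h0 : (Lagrange.nodal S id).eval s = 0 := Lagrange.eval_nodal_at_node (v := id) hs
    simp [q, derivative_pow, h0]
  have hqx : 0 < q.eval x := by
    have := Lagrange.eval_nodal_not_at_node (s := S) (v := id) fun s hs (h : x = s) => hxS (h ▸ hs)
    rw [eval_pow]
    positivity
  set a := (f x - H.eval x) / q.eval x
  have ha : a < 0 := div_neg_of_neg_of_pos (sub_neg.2 hlt) hqx
  set P := H + C a * q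
  have hP : ContDiff ℝ ∞ fun y => P.eval y := by
    simpa only [coe_aeval_eq_eval] using contDiff_aeval (𝕜 := ℝ) P ∞
  have hφ : ContDiffOn ℝ ∞ (fun y => f y - P.eval y) U := hf.sub hP.contDiffOn
  have hφ0 : ∀ y ∈ insert x S, f y - P.eval y = 0 := by
    intro y hy
    rcases Finset.mem_insert.1 hy with rfl | hy
    · simp only [P, a, eval_add, eval_mul, eval_C]
      field_simp
      ring
    · simp [P, (hq y hy).1, (hHf y hy).1]
  have hφ'0 : ∀ y ∈ S, deriv (fun y => f y - P.eval y) y = 0 := by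
    intro y hy
    have hfy := (hf.contDiffAt (hUo.mem_nhds (hSU hy))).differentiableAt (by simp)
    rw [deriv_fun_sub hfy P.differentiableAt, P.deriv]
    simp [P, (hq y hy).2, (hHf y hy).2]
  obtain ⟨c, hc, hc0⟩ := exists_iteratedDeriv_eq_zero_of_lt_card_add_card hUo hU hφ
    (by rw [coe_insert]; exact Set.insert_subset hx hSU) (Finset.subset_insert x S) hφ0 hφ'0
    (n := 2 * #S) (by rw [card_insert_of_notMem hxS]; omega)
  have hPdiff : derivative^[2 * #S] P = C (a * (2 * #S).factorial) := by
    have hqdeg : q.natDegree = 2 * #S := by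
      simp [q, natDegree_pow, Lagrange.natDegree_nodal]
    have hqmonic : q.Monic := Lagrange.nodal_monic.pow 2
    rw [iterate_map_add, iterate_derivative_eq_zero_of_degree_lt hH, zero_add,
      iterate_derivative_C_mul, iterate_derivative_eq_C_of_natDegree_le hqdeg.le,
      ← hqdeg, hqmonic.coeff_natDegree, hqdeg, mul_one, ← C_mul]
  have hsub := iteratedDeriv_sub
    (contDiffAt_infty.1 (hf.contDiffAt (hUo.mem_nhds hc)) (2 * #S))
    (contDiffAt_infty.1 hP.contDiffAt (2 * #S))
  rw [show (fun y => f y - P.eval y) = f - fun y => P.eval y from rfl, hsub,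
    Polynomial.iteratedDeriv, hPdiff] at hc0
  simp only [eval_C] at hc0
  have hfact : 0 < ((2 * #S).factorial : ℝ) := by positivity
  linarith [hf2n c hc, mul_neg_of_neg_of_pos ha hfact]

theorem exists_hermite_interpolant_le {f : ℝ → ℝ} {U : Set ℝ} (hUo : IsOpen U)
    (hU : U.OrdConnected) (hf : ContDiffOn ℝ ∞ f U) {S : Finset ℝ} (hSU : ↑S ⊆ U)
    (hf2n : ∀ x ∈ U, 0 ≤ iteratedDeriv (2 * #S) f x) :
    ∃ H : ℝ[X], H.degree < ↑(2 * #S) ∧ (∀ s ∈ S, H.eval s = f s) ∧ ∀ x ∈ U, H.eval x ≤ f x := by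
  obtain ⟨H, hdeg, hH⟩ := Lagrange.exists_hermite_interpolant (v := id) (injOn_id _) f (deriv f)
  exact ⟨H, hdeg, fun s hs => (hH s hs).1,
    fun x hx => H.eval_le_of_iteratedDeriv_nonneg hUo hU hf hSU hf2n hdeg hH hx⟩

theorem descPochhammer_eval_two_mul_nonneg {S : Type*} [CommRing S] [LinearOrder S]
    [IsStrictOrderedRing S] {r : S} (hr : r ≤ 0) (n : ℕ) :
    0 ≤ (descPochhammer S (2 * n)).eval r := by
  induction n with
  | zero => simp
  | succ n ih =>
    rw [descPochhammer_eval_eq_prod_range] at ih ⊢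
    rw [show 2 * (n + 1) = 2 * n + 1 + 1 by ring, prod_range_succ, prod_range_succ, mul_assoc]
    have hnonpos : ∀ m : ℕ, r - m ≤ 0 := fun m => by
      have : (0 : S) ≤ m := Nat.cast_nonneg m
      linarith
    exact mul_nonneg ih (mul_nonneg_of_nonpos_of_nonpos (hnonpos _) (hnonpos _))

theorem iteratedDeriv_two_mul_rpow_const_nonneg {r : ℝ} (hr : r ≤ 0) (n : ℕ) {x : ℝ}
    (hx : 0 ≤ x) : 0 ≤ iteratedDeriv (2 * n) (fun x => x ^ r) x := by
  rw [iteratedDeriv_eq_iterate, iter_deriv_rpow_const]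
  exact mul_nonneg (descPochhammer_eval_two_mul_nonneg hr n) (rpow_nonneg hx _)

theorem image_sq_Ioo_zero {R : ℝ} (hR : 0 ≤ R) :
    (fun r : ℝ => r ^ 2) '' Ioo 0 R = Ioo 0 (R ^ 2) := by
  ext y
  constructor
  · rintro ⟨r, hr, rfl⟩
    exact ⟨pow_pos hr.1 2, pow_lt_pow_left₀ hr.2 hr.1.le two_ne_zero⟩
  · intro hy
    exact ⟨√y, ⟨sqrt_pos.2 hy.1, (sqrt_lt_sqrt hy.1.le hy.2).trans_eq (sqrt_sq hR)⟩,
      sq_sqrt hy.1.le⟩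

theorem integral_comp_sqrt (v : ℝ → ℝ) {R : ℝ} (hR : 0 ≤ R) :
    ∫ ρ in 0..R ^ 2, v √ρ = 2 * ∫ r in 0..R, v r * r := by
  have hderiv : ∀ r ∈ Ioo (0 : ℝ) R, HasDerivWithinAt (fun r => r ^ 2) (2 * r) (Ioo 0 R) r :=
    fun r _ => by simpa using (hasDerivAt_pow 2 r).hasDerivWithinAt
  have hinj : InjOn (fun r : ℝ => r ^ 2) (Ioo 0 R) :=
    (pow_left_strictMonoOn₀ two_ne_zero).injOn.mono fun r hr => hr.1.le
  rw [intervalIntegral.integral_of_le (by positivity), intervalIntegral.integral_of_le hR,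
    integral_Ioc_eq_integral_Ioo, integral_Ioc_eq_integral_Ioo, ← image_sq_Ioo_zero hR,
    integral_image_eq_integral_abs_deriv_smul measurableSet_Ioo hderiv hinj, ← integral_const_mul]
  refine setIntegral_congr_fun measurableSet_Ioo fun r hr => ?_
  simp only [smul_eq_mul, sqrt_sq hr.1.le, abs_of_pos (by linarith [hr.1] : 0 < 2 * r)]
  ring

theorem intervalIntegrable_comp_sqrt {v : ℝ → ℝ} {R : ℝ} (hR : 0 ≤ R)
    (hv : IntervalIntegrable (fun r => v r * r) volume 0 R) :
    IntervalIntegrable (fun ρ => v √ρ) volume 0 (R ^ 2) := by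
  have hderiv : ∀ r ∈ Ioo (0 : ℝ) R, HasDerivWithinAt (fun r => r ^ 2) (2 * r) (Ioo 0 R) r :=
    fun r _ => by simpa using (hasDerivAt_pow 2 r).hasDerivWithinAt
  have hinj : InjOn (fun r : ℝ => r ^ 2) (Ioo 0 R) :=
    (pow_left_strictMonoOn₀ two_ne_zero).injOn.mono fun r hr => hr.1.le
  rw [intervalIntegrable_iff_integrableOn_Ioo_of_le (by positivity), ← image_sq_Ioo_zero hR,
    integrableOn_image_iff_integrableOn_abs_deriv_smul measurableSet_Ioo hderiv hinj]
  rw [intervalIntegrable_iff_integrableOn_Ioo_of_le hR] at hv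
  refine IntegrableOn.congr_fun (hv.const_mul 2) (fun r hr => ?_) measurableSet_Ioo
  simp only [smul_eq_mul, sqrt_sq hr.1.le, abs_of_pos (by linarith [hr.1] : 0 < 2 * r)]
  ring

theorem gauss_jacobi_weight_bound_general (R : ℝ) (hR : 0 < R) (k N : ℕ)
    (v : ℝ → ℝ)
    (hvpos : ∀ r ∈ Set.Ioo (0:ℝ) R, 0 ≤ v r)
    (hvint : IntervalIntegrable (fun r => v r * r) volume 0 R)
    (t lam : Fin N → ℝ)
    (ht : StrictMono t) (htmem : ∀ j, t j ∈ Set.Ioc 0 (R ^ 2))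
    -- exactness of the Gaussian quadrature on polynomials of degree ≤ 2N−1:
    (hexact : ∀ p : Polynomial ℝ, p.natDegree ≤ 2 * N - 1 →
      ∑ j, lam j * p.eval (t j)
        = (1 / 2) * ∫ ρ in (0:ℝ)..(R ^ 2),
            p.eval ρ * ρ ^ ((k : ℝ) / 2) * v (Real.sqrt ρ)) :
    ∑ j, lam j * (t j) ^ (-(k : ℝ) / 2) ≤ ∫ r in (0:ℝ)..R, v r * r := by
  obtain ⟨H, hdeg, hHt, hHle⟩ := exists_hermite_interpolant_le (f := fun x => x ^ (-(k : ℝ) / 2))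
    isOpen_Ioi ordConnected_Ioi
    (fun x hx => (contDiffAt_rpow_const_of_ne (ne_of_gt hx)).contDiffWithinAt)
    (S := univ.image t) (by simpa [Set.subset_def] using fun j => (htmem j).1)
    (fun x hx => iteratedDeriv_two_mul_rpow_const_nonneg
      (by linarith [(Nat.cast_nonneg k : (0 : ℝ) ≤ k)]) _ (le_of_lt hx))
  rw [Finset.card_image_of_injective _ ht.injective, card_univ, Fintype.card_fin] at hdeg
  have hHdeg : H.natDegree ≤ 2 * N - 1 := by
    rcases eq_or_ne H 0 with rfl | hH0
    · simp
    · have := (natDegree_lt_iff_degree_lt hH0).2 hdeg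
      omega
  have hG := intervalIntegrable_comp_sqrt hR.le hvint
  have hweight : ∀ ρ ∈ Ioo 0 (R ^ 2), H.eval ρ * ρ ^ ((k : ℝ) / 2) * v √ρ ≤ v √ρ := by
    intro ρ hρ
    have hv : 0 ≤ v √ρ := hvpos _ ⟨sqrt_pos.2 hρ.1,
      (sqrt_lt_sqrt hρ.1.le hρ.2).trans_eq (sqrt_sq hR.le)⟩
    refine mul_le_of_le_one_left hv ?_
    calc H.eval ρ * ρ ^ ((k : ℝ) / 2) ≤ ρ ^ (-(k : ℝ) / 2) * ρ ^ ((k : ℝ) / 2) :=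
          mul_le_mul_of_nonneg_right (hHle ρ hρ.1) (rpow_nonneg hρ.1.le _)
      _ = 1 := by rw [← rpow_add hρ.1, neg_div, neg_add_cancel, rpow_zero]
  calc ∑ j, lam j * t j ^ (-(k : ℝ) / 2) = ∑ j, lam j * H.eval (t j) := by
        simp [hHt]
    _ = 1 / 2 * ∫ ρ in 0..R ^ 2, H.eval ρ * ρ ^ ((k : ℝ) / 2) * v √ρ := hexact H hHdeg
    _ ≤ 1 / 2 * ∫ ρ in 0..R ^ 2, v √ρ := by
        gcongr
        refine intervalIntegral.integral_mono_on_of_le_Ioo (by positivity)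
          (hG.continuousOn_mul ?_) hG hweight
        exact (H.continuous.mul (continuous_rpow_const (by positivity))).continuousOn
    _ = ∫ r in 0..R, v r * r := by
        rw [integral_comp_sqrt v hR.le]
        ring

/-- For the measure with density `ρ^{k/2} v(√ρ)/2` on `[0, R²]`, the `N`-point
Gaussian quadrature nodes `t_j` and positive weights `λ_j` satisfy
`∑_j λ_j t_j^{−k/2} ≤ ∫_0^R v(r) r dr`. -/
theorem gauss_jacobi_weight_bound (R : ℝ) (hR : 0 < R) (k N : ℕ) (hN : 1 ≤ N)
    (v : ℝ → ℝ) (hvcont : ContinuousOn v (Set.Ioo 0 R))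
    (hvpos : ∀ r ∈ Set.Ioo (0:ℝ) R, 0 ≤ v r)
    (hvint : IntervalIntegrable (fun r => v r * r) volume 0 R)
    (t lam : Fin N → ℝ)
    (ht : StrictMono t) (htmem : ∀ j, t j ∈ Set.Ioc 0 (R ^ 2))
    (hlam : ∀ j, 0 < lam j)
    -- exactness of the Gaussian quadrature on polynomials of degree ≤ 2N−1:
    (hexact : ∀ p : Polynomial ℝ, p.natDegree ≤ 2 * N - 1 →
      ∑ j, lam j * p.eval (t j)
        = (1 / 2) * ∫ ρ in (0:ℝ)..(R ^ 2),
            p.eval ρ * ρ ^ ((k : ℝ) / 2) * v (Real.sqrt ρ))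
    -- infinite support of the measure (positive definiteness):
    (hinf : ∀ p : Polynomial ℝ, p ≠ 0 →
      0 < (1 / 2) * ∫ ρ in (0:ℝ)..(R ^ 2),
            (p.eval ρ) ^ 2 * ρ ^ ((k : ℝ) / 2) * v (Real.sqrt ρ)) :
    ∑ j, lam j * (t j) ^ (-(k : ℝ) / 2) ≤ ∫ r in (0:ℝ)..R, v r * r :=
  gauss_jacobi_weight_bound_general R hR k N v hvpos hvint t lam ht htmem hexact
end

section
/- Let g be a 2π-periodic function of class C^{2D+1} on ℝ. Then |∫_0^{2π} g(φ) dφ − T_M(g)| ≤ (4π ζ(2D+1) / M^{2D+1}) · sup_{φ ∈ [0,2π]} |g^{(2D+1)}(φ)|, where T_M(g) = (2π/M) Σ_{s=1}^M g(2πs/M) and ζ is the Riemann zeta function. -/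
open Real

/-!
Integrating by parts `p` times shows that the Fourier coefficients of a `T`-periodic `C^p`
function `f` satisfy `|c_n| ≤ (T / 2π|n|)^p · sup |f^{(p)}|`, so for `p ≥ 2` the Fourier series
converges absolutely to `f`. The `M`-point rule integrates `e^{2πinx/T}` exactly to `T` when
`M ∣ n` and to `0` otherwise (a sum of `M`-th roots of unity), so it returns `T Σ_k c_{kM}`,
whereas the integral is `T c_0`. The error `T Σ_{k ≠ 0} c_{kM}` is therefore at most
`2T (T / 2πM)^p sup |f^{(p)}| ζ(p)`.
-/

open Complex Function Finset AddCircle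

theorem iteratedDeriv_ofReal_comp {g : ℝ → ℝ} {n k : ℕ} (hg : ContDiff ℝ n g) (hk : k ≤ n)
    (x : ℝ) : iteratedDeriv k (fun y => (g y : ℂ)) x = iteratedDeriv k g x := by
  simp only [iteratedDeriv_eq_iteratedFDeriv]
  rw [show (fun y => (g y : ℂ)) = ofRealCLM ∘ g from rfl,
    ofRealCLM.iteratedFDeriv_comp_left hg.contDiffAt (by exact_mod_cast hk)]
  rfl

-- The `k = 0` term is `1 / 0 = 0`.
theorem hasSum_int_one_div_abs_pow {p : ℕ} (hp : 1 < p) :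
    HasSum (fun k : ℤ => 1 / |(k : ℝ)| ^ p) (2 * ∑' n : ℕ, (1 : ℝ) / (n + 1) ^ p) := by
  have hs : Summable fun n : ℕ => (1 : ℝ) / (n + 1) ^ p := by
    exact_mod_cast (summable_nat_add_iff 1).mpr (Real.summable_one_div_nat_pow.mpr hp)
  rw [two_mul]
  refine HasSum.of_nat_of_neg_add_one ?_ ?_
  · rw [← hasSum_nat_add_iff' 1]
    simp only [range_one, sum_singleton, Nat.cast_zero, Int.cast_zero, abs_zero,
      zero_pow (by omega : p ≠ 0), div_zero, sub_zero]
    refine hs.hasSum.congr_fun fun n => ?_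
    push_cast
    rw [abs_of_pos (by positivity)]
  · refine hs.hasSum.congr_fun fun n => ?_
    push_cast
    rw [abs_neg, abs_of_pos (by positivity)]

section TrapezoidalRule

variable {E : Type*} [AddCommGroup E] [Module ℝ E]

noncomputable def trapezoidalRule (T : ℝ) (M : ℕ) (f : ℝ → E) : E :=
  (T / M) • ∑ s ∈ range M, f (T * (s + 1) / M)

theorem ofReal_trapezoidalRule (T : ℝ) (M : ℕ) (g : ℝ → ℝ) :
    ((trapezoidalRule T M g : ℝ) : ℂ) = trapezoidalRule T M fun x => (g x : ℂ) := by
  simp [trapezoidalRule]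

theorem trapezoidalRule_const_mul (T : ℝ) (M : ℕ) (c : ℂ) (f : ℝ → ℂ) :
    trapezoidalRule T M (fun x => c * f x) = c * trapezoidalRule T M f := by
  simp only [trapezoidalRule, ← mul_sum, mul_smul_comm]

theorem HasSum.trapezoidalRule [TopologicalSpace E] [IsTopologicalAddGroup E]
    [ContinuousConstSMul ℝ E] {ι : Type*} {F : ι → ℝ → E} {f : ℝ → E}
    (h : ∀ x, HasSum (fun i => F i x) (f x)) (T : ℝ) (M : ℕ) :
    HasSum (fun i => trapezoidalRule T M (F i)) (trapezoidalRule T M f) :=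
  (hasSum_sum fun _ _ => h _).const_smul _

variable {T : ℝ} [hT : Fact (0 < T)]

theorem trapezoidalRule_fourier {M : ℕ} (hM : M ≠ 0) (n : ℤ) :
    trapezoidalRule T M (fun x => (fourier n (x : AddCircle T) : ℂ)) =
      if (M : ℤ) ∣ n then (T : ℂ) else 0 := by
  obtain ⟨ω, hω, hωdef⟩ : ∃ ω, IsPrimitiveRoot ω M ∧ ω = exp (2 * π * I / M) :=
    ⟨_, Complex.isPrimitiveRoot_exp M hM, rfl⟩
  have hnode (s : ℕ) : fourier n ((T * (s + 1) / M : ℝ) : AddCircle T) = (ω ^ n) ^ (s + 1) := by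
    rw [fourier_coe_apply, hωdef, ← Complex.exp_int_mul, ← Complex.exp_nat_mul]
    congr 1
    push_cast
    field_simp [hT.out.ne']
  simp only [trapezoidalRule, hnode]
  split_ifs with hdvd
  · rw [(hω.zpow_eq_one_iff_dvd n).mpr hdvd]
    simp only [one_pow, sum_const, card_range, nsmul_eq_mul, mul_one, real_smul, ofReal_div,
      ofReal_natCast]
    exact div_mul_cancel₀ _ (Nat.cast_ne_zero.mpr hM)
  · have hωn1 : ω ^ n ≠ 1 := fun h => hdvd ((hω.zpow_eq_one_iff_dvd n).mp h)
    have hωnM : (ω ^ n) ^ M = 1 := by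
      rw [← zpow_natCast, ← zpow_mul, mul_comm n, zpow_mul, zpow_natCast, hω.pow_eq_one, one_zpow]
    simp_rw [pow_succ', ← mul_sum, geom_sum_eq hωn1, hωnM, sub_self, zero_div, mul_zero, smul_zero]

end TrapezoidalRule

namespace Function.Periodic

section Deriv

variable {𝕜 F : Type*} [NontriviallyNormedField 𝕜] [NormedAddCommGroup F] [NormedSpace 𝕜 F]
  {f : 𝕜 → F} {c : 𝕜}

protected theorem deriv (hf : Periodic f c) : Periodic (deriv f) c := fun x => by
  rw [← deriv_comp_add_const, funext hf]

protected theorem iteratedDeriv (hf : Periodic f c) (k : ℕ) : Periodic (iteratedDeriv k f) c := by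
  induction k with
  | zero => simpa using hf
  | succ k ih => simpa only [iteratedDeriv_succ] using ih.deriv

end Deriv

variable {T : ℝ} [hT : Fact (0 < T)]

theorem lift_eq_liftIco {B : Type*} {f : ℝ → B} (hf : Periodic f T) (a : ℝ) :
    hf.lift = liftIco T a f := by
  ext x
  induction x using QuotientAddGroup.induction_on with
  | H x =>
    have hmem := toIcoMod_mem_Ico hT.out a x
    have hcoe : ((toIcoMod hT.out a x : ℝ) : AddCircle T) = x := by
      rw [toIcoMod, AddCircle.coe_sub, AddCircle.coe_zsmul, AddCircle.coe_period, smul_zero,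
        sub_zero]
    rw [lift_coe, ← hcoe, liftIco_coe_apply hmem, toIcoMod, hf.sub_zsmul_eq]

theorem fourierCoeff_lift_eq_mul_of_hasDerivAt {f f' : ℝ → ℂ} (hf : Periodic f T)
    (hf' : Periodic f' T) (hderiv : ∀ x, HasDerivAt f (f' x) x)
    (hint : IntervalIntegrable f' MeasureTheory.volume 0 T) {n : ℤ} (hn : n ≠ 0) :
    fourierCoeff hf.lift n = T / (2 * π * I * n) * fourierCoeff hf'.lift n := by
  have hab := lt_add_of_pos_right 0 hT.out
  rw [hf.lift_eq_liftIco 0, hf'.lift_eq_liftIco 0, fourierCoeff_liftIco_eq, fourierCoeff_liftIco_eq,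
    fourierCoeffOn_of_hasDerivAt hab hn (fun x _ => hderiv x) (by rwa [zero_add])]
  have hfT : f (0 + T) = f 0 := by rw [zero_add, hf.eq]
  have : (2 * π * I * n : ℂ) ≠ 0 := by simp [hn, pi_ne_zero, I_ne_zero]
  rw [hfT, sub_self, mul_zero, zero_sub]
  push_cast
  field_simp
  ring

theorem fourierCoeff_lift_eq_pow_mul_iteratedDeriv {f : ℝ → ℂ} {p : ℕ} (hf : Periodic f T)
    (hsm : ContDiff ℝ p f) {n : ℤ} (hn : n ≠ 0) {k : ℕ} (hk : k ≤ p) :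
    fourierCoeff hf.lift n =
      (T / (2 * π * I * n)) ^ k * fourierCoeff (hf.iteratedDeriv k).lift n := by
  induction k with
  | zero =>
    rw [pow_zero, one_mul]
    congr
  | succ k ih =>
    have hderiv : ∀ x, HasDerivAt (iteratedDeriv k f) (iteratedDeriv (k + 1) f x) x := fun x => by
      rw [iteratedDeriv_succ]
      exact (hsm.differentiable_iteratedDeriv k (by exact_mod_cast hk)).differentiableAt.hasDerivAt
    have hint := (hsm.continuous_iteratedDeriv (k + 1) (by exact_mod_cast hk)).intervalIntegrable
      (μ := MeasureTheory.volume) 0 T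
    rw [ih (by omega), (hf.iteratedDeriv k).fourierCoeff_lift_eq_mul_of_hasDerivAt
      (hf.iteratedDeriv (k + 1)) hderiv hint hn, ← mul_assoc, ← pow_succ]

theorem norm_fourierCoeff_lift_le {f : ℝ → ℂ} (hf : Periodic f T) {C : ℝ}
    (hC : ∀ x ∈ Set.Icc 0 T, ‖f x‖ ≤ C) (n : ℤ) : ‖fourierCoeff hf.lift n‖ ≤ C := by
  have hbound : ∀ x ∈ Set.uIoc 0 T, ‖fourier (-n) (x : AddCircle T) • hf.lift x‖ ≤ C :=
    fun x hx => by
      rw [norm_smul, fourier_apply, Circle.norm_coe, one_mul, lift_coe]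
      exact hC x (Set.Ioc_subset_Icc_self (by rwa [Set.uIoc_of_le hT.out.le] at hx))
  have hint := intervalIntegral.norm_integral_le_of_norm_le_const hbound
  rw [sub_zero, abs_of_pos hT.out] at hint
  rw [fourierCoeff_eq_intervalIntegral _ _ 0, zero_add, norm_smul]
  calc _ ≤ ‖1 / T‖ * (C * T) := by gcongr
    _ = C := by
      rw [norm_div, norm_one, Real.norm_of_nonneg hT.out.le]
      field_simp [hT.out.ne']

theorem norm_fourierCoeff_lift_le_of_contDiff {f : ℝ → ℂ} {p : ℕ} (hf : Periodic f T)
    (hsm : ContDiff ℝ p f) {C : ℝ} (hC : ∀ x ∈ Set.Icc 0 T, ‖iteratedDeriv p f x‖ ≤ C) {n : ℤ}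
    (hn : n ≠ 0) : ‖fourierCoeff hf.lift n‖ ≤ (T / (2 * π * |(n : ℝ)|)) ^ p * C := by
  have hfactor : ‖(T : ℂ) / (2 * π * I * n)‖ = T / (2 * π * |(n : ℝ)|) := by
    simp [abs_of_pos hT.out, abs_of_pos pi_pos]
  rw [hf.fourierCoeff_lift_eq_pow_mul_iteratedDeriv hsm hn le_rfl, norm_mul, norm_pow, hfactor]
  exact mul_le_mul_of_nonneg_left ((hf.iteratedDeriv p).norm_fourierCoeff_lift_le hC n)
    (pow_nonneg (div_nonneg hT.out.le (by positivity)) p)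

theorem summable_fourierCoeff_lift_of_contDiff {f : ℝ → ℂ} {p : ℕ} (hf : Periodic f T)
    (hsm : ContDiff ℝ p f) (hp : 2 ≤ p) : Summable (fourierCoeff hf.lift) := by
  obtain ⟨C, hC⟩ := (isCompact_Icc (a := 0) (b := T)).exists_bound_of_continuousOn
    (hsm.continuous_iteratedDeriv p le_rfl).continuousOn
  have hdecay : Summable fun n : ℤ => (T / (2 * π * |(n : ℝ)|)) ^ p * C := by
    have := ((summable_abs_iff.mpr (Real.summable_one_div_int_pow.mpr hp)).mul_left
      ((T / (2 * π)) ^ p * C))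
    refine this.congr fun n => ?_
    rw [abs_div, abs_one, abs_pow]
    ring
  refine hdecay.of_norm_bounded_eventually ?_
  filter_upwards [Filter.eventually_cofinite_ne 0] with n hn
  exact hf.norm_fourierCoeff_lift_le_of_contDiff hsm hC hn

theorem hasSum_fourier_series_lift {f : ℝ → ℂ} (hf : Periodic f T) (hc : Continuous f)
    (hs : Summable (fourierCoeff hf.lift)) (x : ℝ) :
    HasSum (fun n => fourierCoeff hf.lift n * fourier n (x : AddCircle T)) (f x) :=
  has_pointwise_sum_fourier_series_of_summable
    (f := ⟨hf.lift, continuous_coinduced_dom.mpr hc⟩) hs x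

theorem intervalIntegral_eq_mul_fourierCoeff_lift_zero {f : ℝ → ℂ} (hf : Periodic f T) :
    ∫ x in 0..T, f x = T * fourierCoeff hf.lift 0 := by
  rw [fourierCoeff_eq_intervalIntegral _ _ 0, zero_add]
  simp [hT.out.ne']

theorem hasSum_trapezoidalRule {f : ℝ → ℂ} (hf : Periodic f T) (hc : Continuous f)
    (hs : Summable (fourierCoeff hf.lift)) {M : ℕ} (hM : M ≠ 0) :
    HasSum (fun k : ℤ => T * fourierCoeff hf.lift (k * M)) (trapezoidalRule T M f) := by
  have h := HasSum.trapezoidalRule (hf.hasSum_fourier_series_lift hc hs) T M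
  simp only [trapezoidalRule_const_mul, trapezoidalRule_fourier hM] at h
  have hMZ : (M : ℤ) ≠ 0 := by exact_mod_cast hM
  have hvanish : ∀ n ∉ Set.range fun k : ℤ => k * M,
      (fourierCoeff hf.lift n * if (M : ℤ) ∣ n then (T : ℂ) else 0) = 0 := by
    rintro n hn
    rw [if_neg, mul_zero]
    rintro ⟨k, rfl⟩
    exact hn ⟨k, mul_comm _ _⟩
  convert ((mul_left_injective₀ hMZ).hasSum_iff hvanish).mpr h using 1
  ext k
  simp [mul_comm]

theorem norm_intervalIntegral_sub_trapezoidalRule_le {f : ℝ → ℂ} {p M : ℕ} (hf : Periodic f T)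
    (hsm : ContDiff ℝ p f) (hp : 2 ≤ p) (hM : M ≠ 0) {C : ℝ}
    (hC : ∀ x ∈ Set.Icc 0 T, ‖iteratedDeriv p f x‖ ≤ C) :
    ‖(∫ x in 0..T, f x) - trapezoidalRule T M f‖ ≤
      2 * T * (T / (2 * π * M)) ^ p * C * ∑' n : ℕ, (1 : ℝ) / (n + 1) ^ p := by
  set c := fourierCoeff hf.lift
  have hs := hf.summable_fourierCoeff_lift_of_contDiff hsm hp
  have hquad := hf.hasSum_trapezoidalRule hsm.continuous hs hM
  have herr : HasSum (fun k : ℤ => (if k = 0 then T * c 0 else 0) - T * c (k * M))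
      ((∫ x in 0..T, f x) - trapezoidalRule T M f) := by
    rw [hf.intervalIntegral_eq_mul_fourierCoeff_lift_zero]
    exact (hasSum_ite_eq 0 _).sub hquad
  have hbound := (hasSum_int_one_div_abs_pow (by omega : 1 < p)).mul_left
    (T * (T / (2 * π * M)) ^ p * C)
  refine (herr.norm_le_of_bounded hbound fun k => ?_).trans_eq (by ring)
  rcases eq_or_ne k 0 with rfl | hk
  · simp [zero_pow (by omega : p ≠ 0)]
  · have hkM : (k * M : ℤ) ≠ 0 := mul_ne_zero hk (by exact_mod_cast hM)
    have := hf.norm_fourierCoeff_lift_le_of_contDiff hsm hC hkM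
    have hT0 := hT.out.le
    rw [if_neg hk, zero_sub, norm_neg, norm_mul, Complex.norm_real, Real.norm_of_nonneg hT0]
    calc T * ‖c (k * M)‖ ≤ T * ((T / (2 * π * |((k * M : ℤ) : ℝ)|)) ^ p * C) := by gcongr
      _ = T * (T / (2 * π * M)) ^ p * C * (1 / |(k : ℝ)| ^ p) := by
        push_cast
        rw [abs_mul, Nat.abs_cast, mul_comm |(k : ℝ)|, ← mul_assoc, ← div_div, div_pow,
          one_div]
        ring

end Function.Periodic

/-- Trapezoidal-rule error estimate for smooth `2π`-periodic functions:
`|∫_0^{2π} g − T_M(g)| ≤ 4π ζ(2D+1) M^{−(2D+1)} · sup |g^{(2D+1)}|`. -/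
theorem trapezoidal_error_estimate (D M : ℕ) (hD : 1 ≤ D) (hM : 1 ≤ M)
    (g : ℝ → ℝ) (hper : ∀ x : ℝ, g (x + 2 * π) = g x)
    (hsm : ContDiff ℝ (2 * D + 1) g)
    (C : ℝ) (hC : ∀ φ ∈ Set.Icc (0:ℝ) (2 * π), |iteratedDeriv (2 * D + 1) g φ| ≤ C) :
    |(∫ φ in (0:ℝ)..(2 * π), g φ)
        - (2 * π / M) * ∑ s ∈ Finset.range M, g (2 * π * (s + 1) / M)|
      ≤ (4 * π * (∑' n : ℕ, (1 : ℝ) / (n + 1) ^ (2 * D + 1)) / M ^ (2 * D + 1)) * C := by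
  have : Fact (0 < 2 * π) := ⟨two_pi_pos⟩
  have hsmC : ContDiff ℝ (2 * D + 1 : ℕ) fun x => (g x : ℂ) :=
    ofRealCLM.contDiff.comp (by exact_mod_cast hsm)
  have hCC : ∀ x ∈ Set.Icc 0 (2 * π), ‖iteratedDeriv (2 * D + 1) (fun x => (g x : ℂ)) x‖ ≤ C :=
    fun x hx => by
      rw [iteratedDeriv_ofReal_comp hsm le_rfl, Complex.norm_real, Real.norm_eq_abs]
      exact hC x hx
  have hbound := Periodic.norm_intervalIntegral_sub_trapezoidalRule_le (fun x => by simp [hper])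
    hsmC (by omega) (by omega : M ≠ 0) hCC
  rw [intervalIntegral.integral_ofReal, ← ofReal_trapezoidalRule, ← ofReal_sub, Complex.norm_real,
    Real.norm_eq_abs] at hbound
  calc _ = |(∫ φ in (0:ℝ)..(2 * π), g φ) - trapezoidalRule (2 * π) M g| := rfl
    _ ≤ _ := hbound
    _ = _ := by
      rw [div_mul_cancel_left₀ two_pi_pos.ne', inv_pow]
      ring
end
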